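/- arXiv:2201.12022 — 2 statements merged into one kernel-verified Lean document; each statement's English description precedes it below -/
import Mathlib

section
/- Let G be a Lie group, M a smooth manifold, and σ : G × M → M a smooth left action of G on M. Fix x₀ ∈ M. Let g : [t_a, t_b] → G be a C¹ curve and η : [t_a, t_b] → 𝔤 (the tangent space of G at the identity e) a curve such that for every t, the velocity ġ(t) equals the differential at e of the right translation map h ↦ h·g(t) applied to η(t) (i.e. ġ(t) = T_e R_{g(t)} η(t)). Define x(t) = σ(g(t), x₀). Then for every t ∈ [t_a, t_b], the differential of the orbit map h ↦ σ(h, x₀) at g(t) applied to ġ(t) equals the differential of the orbit map h ↦ σ(h, x(t)) at the identity e applied to η(t); in symbols, D₁σ_(g(t),x₀)(ġ(t)) = D₁σ_(e,x(t))(η(t)). -/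
open Manifold Set

section OrbitMap

variable {𝕜 : Type*} [NontriviallyNormedField 𝕜]
  {E : Type*} [NormedAddCommGroup E] [NormedSpace 𝕜 E]
  {HG : Type*} [TopologicalSpace HG] {I : ModelWithCorners 𝕜 E HG}
  {G : Type*} [TopologicalSpace G] [ChartedSpace HG G] [Monoid G] [ContMDiffMul I 1 G]
  {E' : Type*} [NormedAddCommGroup E'] [NormedSpace 𝕜 E']
  {HM : Type*} [TopologicalSpace HM] {I' : ModelWithCorners 𝕜 E' HM}
  {M : Type*} [TopologicalSpace M] [ChartedSpace HM M]

theorem mfderiv_orbit_apply_eq_mfderiv_orbit_mul_right {σ : G → M → M}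
    (hσ_mul : ∀ (a b : G) (x : M), σ (a * b) x = σ a (σ b x)) {x : M} {a b : G}
    (horb : MDifferentiableAt I I' (fun h : G => σ h x) (b * a)) (v : TangentSpace I b) :
    mfderiv I I' (fun h : G => σ h (σ a x)) b v
      = mfderiv I I' (fun h : G => σ h x) (b * a) (mfderiv I I (· * a) b v) := by
  have horbit_translate : (fun h : G => σ h (σ a x)) = (fun h : G => σ h x) ∘ (· * a) := by
    funext h
    simp only [Function.comp_apply, hσ_mul]
  rw [horbit_translate, mfderiv_comp_of_eq horb mdifferentiableAt_mul_right rfl]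
  rfl

end OrbitMap

theorem orbit_map_right_trivialized_velocity_general
    {E : Type*} [NormedAddCommGroup E] [NormedSpace ℝ E]
    {HG : Type*} [TopologicalSpace HG] (I : ModelWithCorners ℝ E HG)
    {G : Type*} [TopologicalSpace G] [ChartedSpace HG G] [Group G]
    [LieGroup I (⊤ : ℕ∞) G]
    {E' : Type*} [NormedAddCommGroup E'] [NormedSpace ℝ E']
    {HM : Type*} [TopologicalSpace HM] (I' : ModelWithCorners ℝ E' HM)
    {M : Type*} [TopologicalSpace M] [ChartedSpace HM M]
    (σ : G → M → M)
    (hσ : ContMDiff (I.prod I') I' (⊤ : ℕ∞) fun p : G × M => σ p.1 p.2)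
    (hσ_mul : ∀ (a b : G) (x : M), σ (a * b) x = σ a (σ b x))
    (x₀ : M) (ta tb : ℝ)
    (g : ℝ → G)
    (η : ℝ → TangentSpace I (1 : G))
    (hη : ∀ t ∈ Icc ta tb,
      mfderiv 𝓘(ℝ, ℝ) I g t (1 : ℝ) = mfderiv I I (fun h : G => h * g t) 1 (η t)) :
    ∀ t ∈ Icc ta tb,
      mfderiv I I' (fun h : G => σ h x₀) (g t) (mfderiv 𝓘(ℝ, ℝ) I g t (1 : ℝ))
        = mfderiv I I' (fun h : G => σ h (σ (g t) x₀)) 1 (η t) := by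
  intro t ht
  have horb : MDifferentiableAt I I' (fun h : G => σ h x₀) (1 * g t) :=
    (hσ.comp (contMDiff_id.prodMk contMDiff_const)).mdifferentiableAt (by simp)
  rw [hη t ht, mfderiv_orbit_apply_eq_mfderiv_orbit_mul_right hσ_mul horb, one_mul]

/-- **Proposition 1 (right trivialization and the orbit map).**
Let `G` be a Lie group, `M` a smooth manifold, and `σ : G × M → M` a smooth left
action of `G` on `M`. Fix `x₀ ∈ M`. Let `g : [tₐ, t_b] → G` be a `C¹` curve and
`η : [tₐ, t_b] → 𝔤 = T₁G` a curve such that `ġ(t) = T₁R_{g(t)} η(t)` for all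
`t ∈ [tₐ, t_b]`, where `R_h` is right translation by `h`. Setting
`x(t) = σ(g(t), x₀)`, for every `t ∈ [tₐ, t_b]` we have
`D₁σ_(g(t),x₀)(ġ(t)) = D₁σ_(e,x(t))(η(t))`,
i.e. the differential of the orbit map `h ↦ σ(h, x₀)` at `g(t)` applied to
`ġ(t)` equals the differential of the orbit map `h ↦ σ(h, x(t))` at the
identity applied to `η(t)`. -/
theorem orbit_map_right_trivialized_velocity
    {E : Type*} [NormedAddCommGroup E] [NormedSpace ℝ E]
    {HG : Type*} [TopologicalSpace HG] (I : ModelWithCorners ℝ E HG)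
    {G : Type*} [TopologicalSpace G] [ChartedSpace HG G] [Group G]
    [IsManifold I (⊤ : ℕ∞) G] [LieGroup I (⊤ : ℕ∞) G]
    {E' : Type*} [NormedAddCommGroup E'] [NormedSpace ℝ E']
    {HM : Type*} [TopologicalSpace HM] (I' : ModelWithCorners ℝ E' HM)
    {M : Type*} [TopologicalSpace M] [ChartedSpace HM M]
    [IsManifold I' (⊤ : ℕ∞) M]
    (σ : G → M → M)
    (hσ : ContMDiff (I.prod I') I' (⊤ : ℕ∞) fun p : G × M => σ p.1 p.2)
    (hσ_one : ∀ x : M, σ 1 x = x)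
    (hσ_mul : ∀ (a b : G) (x : M), σ (a * b) x = σ a (σ b x))
    (x₀ : M) (ta tb : ℝ)
    (g : ℝ → G) (hg : ContMDiffOn 𝓘(ℝ, ℝ) I 1 g (Icc ta tb))
    (η : ℝ → TangentSpace I (1 : G))
    (hη : ∀ t ∈ Icc ta tb,
      mfderiv 𝓘(ℝ, ℝ) I g t (1 : ℝ) = mfderiv I I (fun h : G => h * g t) 1 (η t)) :
    ∀ t ∈ Icc ta tb,
      mfderiv I I' (fun h : G => σ h x₀) (g t) (mfderiv 𝓘(ℝ, ℝ) I g t (1 : ℝ))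
        = mfderiv I I' (fun h : G => σ h (σ (g t) x₀)) 1 (η t) :=
  orbit_map_right_trivialized_velocity_general I I' σ hσ hσ_mul x₀ ta tb g η hη
end

section
/- Regularity of the regularized pendulum Lagrangian: let x₀ ∈ ℝ³ with x₀ ≠ 0, and let m ≠ 0 and M ≠ 0 be real numbers. The symmetric bilinear form on ℝ³ given by B(η, ζ) = m (η × x₀) · (ζ × x₀) + M (η · x₀)(ζ · x₀) (the velocity Hessian of ℓ^reg(g, η) = (m/2)‖η × x₀‖² + (M/2)(η · x₀)² + γ·(g x₀)) is nondegenerate: if B(η, ζ) = 0 for all ζ ∈ ℝ³ then η = 0. Moreover, ℓ^reg agrees with the singular trivialized Lagrangian ℓ^G on the constraint distribution: for every η with η · x₀ = 0, (m/2)‖η × x₀‖² + (M/2)(η · x₀)² = (m/2)‖η × x₀‖². -/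
/-! Testing `B(η, ·)` against `x₀` kills the cross term and forces `η · x₀ = 0`; testing against
`η` then leaves `m ‖η × x₀‖² = 0`. A vector that is both parallel and orthogonal to `x₀ ≠ 0`
vanishes, by Lagrange's identity `‖η × x₀‖² = ‖η‖² ‖x₀‖² - (η · x₀)²`. -/

open Matrix

/-- The Euclidean norm of a vector in `ℝ³`. -/
noncomputable def enorm3 (w : Fin 3 → ℝ) : ℝ :=
  ‖(EuclideanSpace.equiv (Fin 3) ℝ).symm w‖

section CrossProduct

variable {R : Type*} [CommRing R] [LinearOrder R] [IsStrictOrderedRing R]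

theorem eq_zero_of_cross_eq_zero_of_dotProduct_eq_zero {η x : Fin 3 → R} (hx : x ≠ 0)
    (hcross : η ⨯₃ x = 0) (hdot : η ⬝ᵥ x = 0) : η = 0 := by
  have hlagrange := cross_dot_cross η x η x
  rw [hcross, zero_dotProduct, hdot, dotProduct_comm x η, hdot, mul_zero, sub_zero] at hlagrange
  have hxx : x ⬝ᵥ x ≠ 0 := dotProduct_self_eq_zero.not.mpr hx
  exact dotProduct_self_eq_zero.mp ((mul_eq_zero.mp hlagrange.symm).resolve_right hxx)

theorem eq_zero_of_forall_pendulumHessian_eq_zero {x₀ η : Fin 3 → R} {m M : R} (hx₀ : x₀ ≠ 0)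
    (hm : m ≠ 0) (hM : M ≠ 0)
    (hB : ∀ ζ : Fin 3 → R, m * ((η ⨯₃ x₀) ⬝ᵥ (ζ ⨯₃ x₀)) + M * (η ⬝ᵥ x₀) * (ζ ⬝ᵥ x₀) = 0) :
    η = 0 := by
  have horth : η ⬝ᵥ x₀ = 0 := by
    simpa [cross_self, hM, hx₀] using hB x₀
  have hcross : η ⨯₃ x₀ = 0 := by
    simpa [horth, hm] using hB η
  exact eq_zero_of_cross_eq_zero_of_dotProduct_eq_zero hx₀ hcross horth

end CrossProduct

/-- **Regularity of the regularized pendulum Lagrangian.** For `x₀ ∈ ℝ³`,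
`x₀ ≠ 0`, and reals `m ≠ 0`, `M ≠ 0`, the symmetric bilinear form
`B(η, ζ) = m (η × x₀) · (ζ × x₀) + M (η · x₀)(ζ · x₀)` (the velocity Hessian of
`ℓ^reg(g, η) = (m/2)‖η × x₀‖² + (M/2)(η · x₀)² + γ · (g x₀)`) is nondegenerate:
if `B(η, ζ) = 0` for all `ζ` then `η = 0`. Moreover `ℓ^reg` agrees with the
singular trivialized Lagrangian `ℓ^G` on the constraint distribution: whenever
`η · x₀ = 0`, `(m/2)‖η × x₀‖² + (M/2)(η · x₀)² = (m/2)‖η × x₀‖²`. -/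
theorem regularized_pendulum_lagrangian_regular (x₀ : Fin 3 → ℝ) (hx₀ : x₀ ≠ 0)
    (m M : ℝ) (hm : m ≠ 0) (hM : M ≠ 0) :
    (∀ η : Fin 3 → ℝ,
      (∀ ζ : Fin 3 → ℝ,
        m * ((η ⨯₃ x₀) ⬝ᵥ (ζ ⨯₃ x₀)) + M * (η ⬝ᵥ x₀) * (ζ ⬝ᵥ x₀) = 0) → η = 0) ∧
    (∀ η : Fin 3 → ℝ, η ⬝ᵥ x₀ = 0 →
      m / 2 * enorm3 (η ⨯₃ x₀) ^ 2 + M / 2 * (η ⬝ᵥ x₀) ^ 2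
        = m / 2 * enorm3 (η ⨯₃ x₀) ^ 2) :=
  ⟨fun _ hB => eq_zero_of_forall_pendulumHessian_eq_zero hx₀ hm hM hB,
    fun η hη => by rw [hη]; ring⟩
end
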